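/- arXiv:1102.0182 — 4 statements merged into one kernel-verified Lean document; each statement's English description precedes it below -/
import Mathlib

section
/- For the nonlinear lifting E^#(ρ) = (I ⊗ ρ^{1/2}) π (I ⊗ ρ^{1/2}) with π = ∑_{i,j} e_{ij} ⊗ Λ(e_{ij}) and Λ a unital completely positive map, one has Tr₂ E^#(ρ) = ρ and Tr₁ E^#(ρ) = (Λ^#(ρ))^T, where Λ^# is the dual (trace) adjoint of Λ and T denotes transposition. -/
open Matrix Kronecker BigOperators ComplexOrder

/-- The square root of a positive semidefinite matrix, as defined in the older Mathlib
(`Matrix.PosSemidef.sqrt`, since removed). -/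
noncomputable def Matrix.PosSemidef.sqrt {n 𝕜 : Type*} [Fintype n] [RCLike 𝕜] [DecidableEq n]
    {A : Matrix n n 𝕜} (hA : A.PosSemidef) : Matrix n n 𝕜 :=
  hA.1.eigenvectorUnitary.1 * diagonal ((↑) ∘ (√·) ∘ hA.1.eigenvalues) *
    (star hA.1.eigenvectorUnitary : Matrix n n 𝕜)

/-!
Conjugating the Choi matrix `∑ᵢⱼ eᵢⱼ ⊗ Λ(eᵢⱼ)` by `1 ⊗ √ρ` gives the Choi matrix of
`a ↦ √ρ Λ(a) √ρ`. Tracing out the left factor of a Choi matrix of `Φ` gives `∑ᵢ Φ(eᵢᵢ) = Φ(1)`,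
which here is `√ρ Λ(1) √ρ = ρ`; tracing out the right factor gives the matrix of traces
`Tr Φ(eᵢⱼ) = Tr(ρ Λ(eᵢⱼ)) = Tr(Λ^#(ρ) eᵢⱼ) = Λ^#(ρ)ⱼᵢ`.
-/

namespace Matrix

namespace PosSemidef

variable {n 𝕜 : Type*} [Fintype n] [RCLike 𝕜] [DecidableEq n] {A : Matrix n n 𝕜}

theorem sqrt_eq_cfc (hA : A.PosSemidef) : hA.sqrt = cfc Real.sqrt A := by
  rw [hA.1.cfc_eq]
  rfl

theorem sqrt_mul_sqrt (hA : A.PosSemidef) : hA.sqrt * hA.sqrt = A := by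
  have spectrum_nonneg : ∀ x ∈ spectrum ℝ A, 0 ≤ x := by
    rw [hA.1.spectrum_real_eq_range_eigenvalues]
    rintro _ ⟨i, rfl⟩
    exact hA.eigenvalues_nonneg i
  rw [sqrt_eq_cfc, ← cfc_mul ..]
  conv_rhs => rw [← cfc_id' ℝ A (ha := hA.1.isSelfAdjoint)]
  exact cfc_congr fun x hx => Real.mul_self_sqrt (spectrum_nonneg x hx)

end PosSemidef

section PartialTrace

variable {m n R : Type*} [CommSemiring R]

def traceLeft [Fintype m] : Matrix (m × n) (m × n) R →ₗ[R] Matrix n n R where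
  toFun M := of fun k l => ∑ a, M (a, k) (a, l)
  map_add' M N := by ext; simp [Finset.sum_add_distrib]
  map_smul' c M := by ext; simp [Finset.mul_sum]

def traceRight [Fintype n] : Matrix (m × n) (m × n) R →ₗ[R] Matrix m m R where
  toFun M := of fun i j => ∑ k, M (i, k) (j, k)
  map_add' M N := by ext; simp [Finset.sum_add_distrib]
  map_smul' c M := by ext; simp [Finset.mul_sum]

theorem traceLeft_kronecker [Fintype m] (A : Matrix m m R) (B : Matrix n n R) :
    traceLeft (A ⊗ₖ B) = A.trace • B := by
  ext k l
  simp [traceLeft, trace, Finset.sum_mul]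

theorem traceRight_kronecker [Fintype n] (A : Matrix m m R) (B : Matrix n n R) :
    traceRight (A ⊗ₖ B) = B.trace • A := by
  ext i j
  simp [traceRight, trace, Finset.mul_sum, mul_comm]

variable [Fintype m] [DecidableEq m]

def choiMatrix (Φ : Matrix m m R → Matrix n n R) : Matrix (m × n) (m × n) R :=
  ∑ i, ∑ j, single i j 1 ⊗ₖ Φ (single i j 1)

theorem one_kronecker_mul_choiMatrix_mul [Fintype n] (Φ : Matrix m m R → Matrix n n R)
    (S T : Matrix n n R) :
    (1 ⊗ₖ S) * choiMatrix Φ * (1 ⊗ₖ T) = choiMatrix (fun a => S * Φ a * T) := by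
  simp only [choiMatrix, Finset.mul_sum, Finset.sum_mul, ← mul_kronecker_mul, Matrix.one_mul,
    Matrix.mul_one]

theorem traceLeft_choiMatrix (Φ : Matrix m m R → Matrix n n R) :
    traceLeft (choiMatrix Φ) = ∑ i, Φ (single i i 1) := by
  simp only [choiMatrix, map_sum, traceLeft_kronecker]
  refine Finset.sum_congr rfl fun i _ => ?_
  rw [Fintype.sum_eq_single i fun j hj => by rw [trace_single_eq_of_ne i j _ hj.symm, zero_smul],
    trace_single_eq_same, one_smul]

theorem traceRight_choiMatrix [Fintype n] (Φ : Matrix m m R → Matrix n n R) :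
    traceRight (choiMatrix Φ) = of fun i j => (Φ (single i j 1)).trace := by
  simp only [choiMatrix, map_sum, traceRight_kronecker, smul_single, smul_eq_mul, mul_one]
  exact sum_sum_single _

end PartialTrace

end Matrix

theorem stmt14_general (d : ℕ)
    (Λ : Matrix (Fin d) (Fin d) ℂ →ₗ[ℂ] Matrix (Fin d) (Fin d) ℂ)
    (hΛ : Λ 1 = 1)
    (π : Matrix (Fin d × Fin d) (Fin d × Fin d) ℂ)
    (hπ : π = ∑ i : Fin d, ∑ j : Fin d,
        Matrix.single i j (1 : ℂ) ⊗ₖ Λ (Matrix.single i j 1))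
    (ρ : Matrix (Fin d) (Fin d) ℂ) (hρ : ρ.PosSemidef)
    -- the dual map value D = Λ^#(ρ), characterized by Tr(D a) = Tr(ρ Λ(a))
    (D : Matrix (Fin d) (Fin d) ℂ)
    (hD : ∀ a : Matrix (Fin d) (Fin d) ℂ, (D * a).trace = (ρ * Λ a).trace)
    (Elift : Matrix (Fin d × Fin d) (Fin d × Fin d) ℂ)
    (hElift : Elift = ((1 : Matrix (Fin d) (Fin d) ℂ) ⊗ₖ hρ.sqrt) * π *
        ((1 : Matrix (Fin d) (Fin d) ℂ) ⊗ₖ hρ.sqrt)) :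
    -- Tr₂ E^#(ρ) = ρ : tracing out the first tensor factor
    (Matrix.of fun k l : Fin d => ∑ a : Fin d, Elift (a, k) (a, l)) = ρ ∧
    -- Tr₁ E^#(ρ) = (Λ^#(ρ))ᵀ : tracing out the second tensor factor
    (Matrix.of fun i j : Fin d => ∑ m : Fin d, Elift (i, m) (j, m)) = Dᵀ := by
  set S := hρ.sqrt
  have hElift_choi : Elift = choiMatrix (fun a => S * Λ a * S) := by
    rw [hElift, hπ]
    exact one_kronecker_mul_choiMatrix_mul Λ S S
  have hSS : S * S = ρ := hρ.sqrt_mul_sqrt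
  constructor
  · change traceLeft Elift = ρ
    rw [hElift_choi, traceLeft_choiMatrix, ← Finset.sum_mul, ← Finset.mul_sum, ← map_sum,
      sum_single_one, hΛ, Matrix.mul_one, hSS]
  · change traceRight Elift = Dᵀ
    ext i j
    rw [hElift_choi, traceRight_choiMatrix, of_apply, trace_mul_cycle, hSS, ← hD, trace_mul_single]
    simp only [transpose_apply, MulOpposite.op_one, one_smul]

/-- For the nonlinear lifting
`E^#(ρ) = (I ⊗ ρ^{1/2}) π (I ⊗ ρ^{1/2})` with `π = ∑_{i,j} e_{ij} ⊗ Λ(e_{ij})`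
the (positive semidefinite) Choi-type operator of a unital completely positive
map `Λ`, one has `Tr₂ E^#(ρ) = ρ` (tracing out the first factor) and
`Tr₁ E^#(ρ) = (Λ^#(ρ))ᵀ` (tracing out the second factor), where `Λ^#` is the
trace dual of `Λ`. -/
theorem stmt14 (d : ℕ)
    (Λ : Matrix (Fin d) (Fin d) ℂ →ₗ[ℂ] Matrix (Fin d) (Fin d) ℂ)
    (hΛ : Λ 1 = 1)
    (π : Matrix (Fin d × Fin d) (Fin d × Fin d) ℂ)
    (hπ : π = ∑ i : Fin d, ∑ j : Fin d,
        Matrix.single i j (1 : ℂ) ⊗ₖ Λ (Matrix.single i j 1))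
    -- complete positivity of Λ, expressed by positivity of its Choi operator π
    (hCP : π.PosSemidef)
    (ρ : Matrix (Fin d) (Fin d) ℂ) (hρ : ρ.PosSemidef) (htr : ρ.trace = 1)
    -- the dual map value D = Λ^#(ρ), characterized by Tr(D a) = Tr(ρ Λ(a))
    (D : Matrix (Fin d) (Fin d) ℂ)
    (hD : ∀ a : Matrix (Fin d) (Fin d) ℂ, (D * a).trace = (ρ * Λ a).trace)
    (Elift : Matrix (Fin d × Fin d) (Fin d × Fin d) ℂ)
    (hElift : Elift = ((1 : Matrix (Fin d) (Fin d) ℂ) ⊗ₖ hρ.sqrt) * π *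
        ((1 : Matrix (Fin d) (Fin d) ℂ) ⊗ₖ hρ.sqrt)) :
    -- Tr₂ E^#(ρ) = ρ : tracing out the first tensor factor
    (Matrix.of fun k l : Fin d => ∑ a : Fin d, Elift (a, k) (a, l)) = ρ ∧
    -- Tr₁ E^#(ρ) = (Λ^#(ρ))ᵀ : tracing out the second tensor factor
    (Matrix.of fun i j : Fin d => ∑ m : Fin d, Elift (i, m) (j, m)) = Dᵀ :=
  stmt14_general d Λ hΛ π hπ ρ hρ D hD Elift hElift
end

section
/- A circulant operator ρ = ∑_{α=0}^{d−1} ρ^{(α)} with ρ^{(α)} = ∑_{i,j} a^{(α)}_{ij} e_{ij} ⊗ S^α e_{ij} S^{*α}, built from positive semidefinite d×d matrices a^{(0)},…,a^{(d−1)}, is positive semidefinite; it is a density matrix if and only if Tr(a^{(0)} + … + a^{(d−1)}) = 1. -/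
open Matrix Kronecker BigOperators ComplexOrder

/-!
Since `e_{ij} ⊗ e_{i+α,j+α} = e_{(i,i+α),(j,j+α)}`, each `ρ^{(α)}` is the pushforward of `a^{(α)}`
along the injection `i ↦ (i, i+α)`, i.e. `Pᴴ a^{(α)} P` for the 0/1 matrix `P` of that map.
Congruence preserves positivity and an injective pushforward preserves the trace.
-/

namespace Matrix

variable {n m R : Type*} [Fintype n] [DecidableEq m]

theorem sum_smul_single_eq_conjTranspose_mul_mul [Semiring R] [StarRing R] (g : n → m)
    (A : Matrix n n R) :
    ∑ i, ∑ j, A i j • single (g i) (g j) (1 : R) =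
      ((1 : Matrix m m R).submatrix g id)ᴴ * A * (1 : Matrix m m R).submatrix g id := by
  ext k l
  rw [conjTranspose_submatrix, conjTranspose_one]
  simp only [sum_apply, smul_apply, single_apply, mul_apply, submatrix_apply, one_apply, id,
    smul_eq_mul, mul_ite, ite_mul, mul_one, mul_zero, zero_mul, one_mul]
  rw [Finset.sum_comm]
  refine Finset.sum_congr rfl fun j _ => ?_
  split_ifs <;> simp_all [eq_comm]

theorem PosSemidef.sum_smul_single [Finite m] [Ring R] [PartialOrder R] [StarRing R]
    {A : Matrix n n R} (hA : A.PosSemidef) (g : n → m) :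
    (∑ i, ∑ j, A i j • single (g i) (g j) (1 : R)).PosSemidef := by
  rw [sum_smul_single_eq_conjTranspose_mul_mul]
  exact hA.conjTranspose_mul_mul_same _

theorem trace_sum_smul_single [Fintype m] [Semiring R] {g : n → m} (hg : g.Injective)
    (A : Matrix n n R) :
    trace (∑ i, ∑ j, A i j • single (g i) (g j) (1 : R)) = A.trace := by
  simp only [trace_sum, trace_smul]
  refine Finset.sum_congr rfl fun i _ => ?_
  have hoff : ∀ j ≠ i, A i j • trace (single (g i) (g j) (1 : R)) = 0 := fun j hj => by
    rw [trace_single_eq_of_ne _ _ _ (hg.ne hj.symm), smul_zero]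
  rw [Finset.sum_eq_single i (fun j _ => hoff j) (by simp), trace_single_eq_same, smul_eq_mul,
    mul_one, diag_apply]

end Matrix

theorem stmt17_general (d : ℕ)
    (a : Fin d → Matrix (Fin d) (Fin d) ℂ)
    (ha : ∀ α, (a α).PosSemidef)
    (ρ : Matrix (Fin d × Fin d) (Fin d × Fin d) ℂ)
    (hρ : ρ = ∑ α : Fin d, ∑ i : Fin d, ∑ j : Fin d,
      a α i j • (Matrix.single i j (1 : ℂ) ⊗ₖ
        Matrix.single (i + α) (j + α) (1 : ℂ))) :
    ρ.PosSemidef ∧ (ρ.trace = 1 ↔ ∑ α : Fin d, (a α).trace = 1) := by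
  simp_rw [single_kronecker_single, mul_one] at hρ
  subst hρ
  have hinj (α : Fin d) : Function.Injective fun i => (i, i + α) :=
    fun _ _ h => congrArg Prod.fst h
  refine ⟨posSemidef_sum _ fun α _ => (ha α).sum_smul_single _, ?_⟩
  rw [trace_sum, Finset.sum_congr rfl fun α _ => trace_sum_smul_single (hinj α) (a α)]

/-- A circulant operator
`ρ = ∑_α ρ^{(α)}`, `ρ^{(α)} = ∑_{i,j} a^{(α)}_{ij} e_{ij} ⊗ S^α e_{ij} S^{*α}
= ∑_{i,j} a^{(α)}_{ij} e_{ij} ⊗ e_{i+α,j+α}`, built from positive semidefinite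
`d×d` matrices `a^{(α)}`, is positive semidefinite; it is a density matrix
(unit trace) if and only if `∑_α Tr a^{(α)} = 1`. -/
theorem stmt17 (d : ℕ) [NeZero d]
    (a : Fin d → Matrix (Fin d) (Fin d) ℂ)
    (ha : ∀ α, (a α).PosSemidef)
    (ρ : Matrix (Fin d × Fin d) (Fin d × Fin d) ℂ)
    (hρ : ρ = ∑ α : Fin d, ∑ i : Fin d, ∑ j : Fin d,
      a α i j • (Matrix.single i j (1 : ℂ) ⊗ₖ
        Matrix.single (i + α) (j + α) (1 : ℂ))) :
    ρ.PosSemidef ∧ (ρ.trace = 1 ↔ ∑ α : Fin d, (a α).trace = 1) :=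
  stmt17_general d a ha ρ hρ
end

section
/- The partial transpose of a circulant state is circulant with respect to the permuted decomposition: if ρ = ∑_α ∑_{i,j} a^{(α)}_{ij} e_{ij} ⊗ S^α e_{ij} S^{*α}, then ρ^Γ = (id ⊗ transpose)(ρ) = ∑_α ∑_{i,j} ã^{(α)}_{ij} e_{ij} ⊗ S^α e_{π(i)π(j)} S^{*α}, where π(0)=0, π(i)=d−i, and ã^{(α)} = ∑_{β=0}^{d−1} a^{(α+β mod d)} ∘ (Π S^β) with ∘ the Hadamard product and Π the permutation matrix of π. Consequently ρ is PPT if and only if ã^{(α)} ≥ 0 for all α. -/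
/-!
Index `ρ` by pairs `(i, k)`. A circulant matrix `∑ α, ∑ i j, c α i j • e_{ij} ⊗ e_{f i + α, f j + α}`
becomes block diagonal, with blocks `c α`, after the shear `(i, k) ↦ (i, k - f i)`. The partial
transpose exchanges the second indices of row and column, which turns the shear `k - i` into
`k + i`: `ρ^Γ` is again circulant, now for `f = -id`, with blocks `ã α i j = a (α - i - j) i j`,
and the Hadamard products with `Π S^β` are exactly what selects `β = -i - j`. Positivity of a
block diagonal matrix conjugated by a permutation is positivity of its blocks.
-/

open Matrix Kronecker BigOperators ComplexOrder

namespace Matrix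

def partialTranspose {m n α : Type*} (M : Matrix (m × n) (m × n) α) :
    Matrix (m × n) (m × n) α :=
  of fun x y => M (x.1, y.2) (y.1, x.2)

section BlockDiagonal

variable {m n R : Type*} [Fintype m] [Fintype n] [DecidableEq n]
  [CommRing R] [PartialOrder R] [StarRing R] [StarOrderedRing R]

theorem posSemidef_blockDiagonal_iff {M : n → Matrix m m R} :
    (blockDiagonal M).PosSemidef ↔ ∀ k, (M k).PosSemidef := by
  refine ⟨fun h k => ?_, fun h => .of_dotProduct_mulVec_nonneg ?_ fun x => ?_⟩
  · convert h.submatrix fun i => (i, k)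
    ext i j
    simp [blockDiagonal_apply]
  · rw [IsHermitian, blockDiagonal_conjTranspose]
    exact congrArg _ (funext fun k => (h k).1)
  · have hblocks : star x ⬝ᵥ blockDiagonal M *ᵥ x
        = ∑ k, star (fun i => x (i, k)) ⬝ᵥ M k *ᵥ fun i => x (i, k) := by
      simp only [dotProduct, mulVec, blockDiagonal_apply, Fintype.sum_prod_type, ite_mul,
        zero_mul, Finset.sum_ite_eq, Finset.mem_univ, if_true, Pi.star_apply]
      rw [Finset.sum_comm]
    rw [hblocks]
    exact Finset.sum_nonneg fun k _ => (h k).dotProduct_mulVec_nonneg _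

end BlockDiagonal

section Shift

variable {G R : Type*} [Fintype G] [DecidableEq G] [Semiring R]

theorem pow_apply_of_shift [AddMonoid G] {S : Matrix G G R} {g : G}
    (hS : ∀ i j, S i j = if i = j + g then 1 else 0) (n : ℕ) (i j : G) :
    (S ^ n) i j = if i = j + n • g then 1 else 0 := by
  induction n generalizing i j with
  | zero => simp [one_apply]
  | succ n ih =>
    simp only [pow_succ, mul_apply, hS, ih, mul_ite, mul_one, mul_zero, Finset.sum_ite_eq',
      Finset.mem_univ, if_true, succ_nsmul', add_assoc]

theorem mul_pow_apply_of_reflection_of_shift [AddCommGroup G] {P S : Matrix G G R} {g : G}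
    (hP : ∀ i j, P i j = if i = -j then 1 else 0)
    (hS : ∀ i j, S i j = if i = j + g then 1 else 0) (n : ℕ) (i j : G) :
    (P * S ^ n) i j = if i = -(j + n • g) then 1 else 0 := by
  simp only [mul_apply, hP, pow_apply_of_shift hS, mul_ite, mul_one, mul_zero, Finset.sum_ite_eq',
    Finset.mem_univ, if_true]

end Shift

end Matrix

theorem Fin.val_nsmul_one {d : ℕ} [NeZero d] (a : Fin d) : (a : ℕ) • (1 : Fin d) = a := by
  let _ := Fin.instCommRing d
  rw [nsmul_one, Fin.cast_val_eq_self]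

theorem sum_hadamard_reflection_mul_shift_pow_apply {d : ℕ} [NeZero d] {R : Type*} [Semiring R]
    {P S : Matrix (Fin d) (Fin d) R} (hP : ∀ i j, P i j = if i = -j then 1 else 0)
    (hS : ∀ i j, S i j = if i = j + 1 then 1 else 0) (c : Fin d → Matrix (Fin d) (Fin d) R)
    (i j : Fin d) :
    (∑ β : Fin d, (c β).hadamard (P * S ^ (β : ℕ))) i j = c (-i - j) i j := by
  have hcond : ∀ β : Fin d, i = -(j + β) ↔ β = -i - j := fun β => by
    constructor <;> rintro rfl <;> abel
  simp only [Matrix.sum_apply, hadamard_apply, mul_pow_apply_of_reflection_of_shift hP hS,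
    Fin.val_nsmul_one, hcond, mul_ite, mul_one, mul_zero, Finset.sum_ite_eq', Finset.mem_univ,
    if_true]

section BlockCirculant

variable {G R : Type*} [AddCommGroup G] [Fintype G] [DecidableEq G]

def shearEquiv (f : G → G) : G × G ≃ G × G where
  toFun p := (p.1, p.2 - f p.1)
  invFun p := (p.1, p.2 + f p.1)
  left_inv p := by simp
  right_inv p := by simp

/-- `e_{ij} ⊗ S^α e_{f i, f j} S^{*α} = e_{ij} ⊗ e_{f i + α, f j + α}`: the circulant state is
`blockCirculant id a`, and the claimed form of its partial transpose is `blockCirculant (-id) ã`. -/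
def blockCirculant [Semiring R] (f : G → G) (c : G → Matrix G G R) :
    Matrix (G × G) (G × G) R :=
  ∑ α, ∑ i, ∑ j, c α i j • (single i j (1 : R) ⊗ₖ single (f i + α) (f j + α) (1 : R))

theorem blockCirculant_apply [Semiring R] (f : G → G) (c : G → Matrix G G R)
    (x₁ x₂ y₁ y₂ : G) :
    blockCirculant f c (x₁, x₂) (y₁, y₂) =
      if x₂ - f x₁ = y₂ - f y₁ then c (x₂ - f x₁) x₁ y₁ else 0 := by
  simp only [blockCirculant, single_kronecker_single, mul_one, smul_single, smul_eq_mul,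
    Matrix.sum_apply, single_apply, Prod.mk.injEq, and_assoc, ite_and, Finset.sum_ite_irrel,
    Finset.sum_const_zero]
  rw [Finset.sum_comm]
  simp only [Finset.sum_ite_irrel, Finset.sum_const_zero, Finset.sum_ite_eq', Finset.mem_univ,
    if_true, ← eq_sub_iff_add_eq']

theorem blockCirculant_eq_submatrix [Semiring R] (f : G → G) (c : G → Matrix G G R) :
    blockCirculant f c = (blockDiagonal c).submatrix (shearEquiv f) (shearEquiv f) := by
  ext ⟨x₁, x₂⟩ ⟨y₁, y₂⟩
  rw [blockCirculant_apply]
  rfl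

theorem posSemidef_blockCirculant_iff [CommRing R] [PartialOrder R] [StarRing R]
    [StarOrderedRing R] (f : G → G) (c : G → Matrix G G R) :
    (blockCirculant f c).PosSemidef ↔ ∀ α, (c α).PosSemidef := by
  rw [blockCirculant_eq_submatrix, posSemidef_submatrix_equiv, posSemidef_blockDiagonal_iff]

theorem partialTranspose_blockCirculant [Semiring R] (f : G → G) (c : G → Matrix G G R) :
    (blockCirculant f c).partialTranspose =
      blockCirculant (-f) fun α => of fun i j => c (α - f i - f j) i j := by
  ext ⟨x₁, x₂⟩ ⟨y₁, y₂⟩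
  simp only [partialTranspose, of_apply, blockCirculant_apply, Pi.neg_apply, sub_neg_eq_add]
  have hcond : y₂ - f x₁ = x₂ - f y₁ ↔ x₂ + f x₁ = y₂ + f y₁ := by
    rw [sub_eq_sub_iff_add_eq_add, eq_comm]
  simp only [add_sub_cancel_right, hcond]
  split_ifs with h
  · rw [hcond.mpr h]
  · rfl

end BlockCirculant

theorem stmt18_general (d : ℕ) [NeZero d]
    (a : Fin d → Matrix (Fin d) (Fin d) ℂ)
    (ρ : Matrix (Fin d × Fin d) (Fin d × Fin d) ℂ)
    (hρ : ρ = ∑ α : Fin d, ∑ i : Fin d, ∑ j : Fin d,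
      a α i j • (Matrix.single i j (1 : ℂ) ⊗ₖ
        Matrix.single (i + α) (j + α) (1 : ℂ)))
    -- partial transpose with respect to the second factor
    (ρΓ : Matrix (Fin d × Fin d) (Fin d × Fin d) ℂ)
    (hρΓ : ∀ x y, ρΓ x y = ρ (x.1, y.2) (y.1, x.2))
    -- the permutation matrix Π of π(i) = -i and the shift matrix S
    (Pm Sm : Matrix (Fin d) (Fin d) ℂ)
    (hPm : ∀ i j, Pm i j = if i = -j then 1 else 0)
    (hS : ∀ i j, Sm i j = if i = j + 1 then 1 else 0)
    -- the matrices ã^{(α)} = ∑_β a^{(α+β)} ∘ (Π S^β)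
    (at' : Fin d → Matrix (Fin d) (Fin d) ℂ)
    (hat : ∀ α, at' α = ∑ β : Fin d, (a (α + β)).hadamard (Pm * Sm ^ (β : ℕ))) :
    (ρΓ = ∑ α : Fin d, ∑ i : Fin d, ∑ j : Fin d,
      at' α i j • (Matrix.single i j (1 : ℂ) ⊗ₖ
        Matrix.single (-i + α) (-j + α) (1 : ℂ))) ∧
    (ρΓ.PosSemidef ↔ ∀ α, (at' α).PosSemidef) := by
  have hat_apply : at' = fun α => of fun i j => a (α - id i - id j) i j := by
    ext α i j
    rw [hat, sum_hadamard_reflection_mul_shift_pow_apply hPm hS, of_apply, sub_sub,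
      sub_eq_add_neg α, neg_add']
    rfl
  have hΓ : ρΓ = blockCirculant (-id) at' := by
    rw [hat_apply, ← partialTranspose_blockCirculant, ← show ρ = blockCirculant id a from hρ]
    ext x y
    exact hρΓ x y
  exact ⟨hΓ, hΓ ▸ posSemidef_blockCirculant_iff _ _⟩

/-- The partial transpose of a circulant state is circulant with
respect to the permuted decomposition. If
`ρ = ∑_α ∑_{i,j} a^{(α)}_{ij} e_{ij} ⊗ e_{i+α,j+α}`, then
`ρ^Γ = (id ⊗ transpose)(ρ) = ∑_α ∑_{i,j} ã^{(α)}_{ij} e_{ij} ⊗ e_{π(i)+α,π(j)+α}`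
with `π(i) = -i` (i.e. `π(0)=0`, `π(i)=d-i`) and
`ã^{(α)} = ∑_β a^{(α+β)} ∘ (Π S^β)` (Hadamard product, `Π` the permutation
matrix of `π`, `S` the shift). Consequently `ρ` is PPT iff all `ã^{(α)} ≥ 0`. -/
theorem stmt18 (d : ℕ) [NeZero d]
    (a : Fin d → Matrix (Fin d) (Fin d) ℂ)
    (ha : ∀ α, (a α).PosSemidef)
    (ρ : Matrix (Fin d × Fin d) (Fin d × Fin d) ℂ)
    (hρ : ρ = ∑ α : Fin d, ∑ i : Fin d, ∑ j : Fin d,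
      a α i j • (Matrix.single i j (1 : ℂ) ⊗ₖ
        Matrix.single (i + α) (j + α) (1 : ℂ)))
    -- partial transpose with respect to the second factor
    (ρΓ : Matrix (Fin d × Fin d) (Fin d × Fin d) ℂ)
    (hρΓ : ∀ x y, ρΓ x y = ρ (x.1, y.2) (y.1, x.2))
    -- the permutation matrix Π of π(i) = -i and the shift matrix S
    (Pm Sm : Matrix (Fin d) (Fin d) ℂ)
    (hPm : ∀ i j, Pm i j = if i = -j then 1 else 0)
    (hS : ∀ i j, Sm i j = if i = j + 1 then 1 else 0)
    -- the matrices ã^{(α)} = ∑_β a^{(α+β)} ∘ (Π S^β)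
    (at' : Fin d → Matrix (Fin d) (Fin d) ℂ)
    (hat : ∀ α, at' α = ∑ β : Fin d, (a (α + β)).hadamard (Pm * Sm ^ (β : ℕ))) :
    (ρΓ = ∑ α : Fin d, ∑ i : Fin d, ∑ j : Fin d,
      at' α i j • (Matrix.single i j (1 : ℂ) ⊗ₖ
        Matrix.single (-i + α) (-j + α) (1 : ℂ))) ∧
    (ρΓ.PosSemidef ↔ ∀ α, (at' α).PosSemidef) :=
  stmt18_general d a ρ hρ ρΓ hρΓ Pm Sm hPm hS at' hat
end

section
/- The circulant lifting E^#(ρ) = ∑_{α=0}^{d−1} ∑_{i,j} c^{(α)}_{ij} e_{ij} ⊗ V_{iα} ρ V_{iα}^*, with positive matrices c^{(α)} of unit trace and V_{iα} = |e_{i+α}⟩⟨e_α|, equals the circulant state ∑_α ∑_{i,j} a^{(α)}_{ij} e_{ij} ⊗ S^α e_{ij} S^{*α} with a^{(α)}_{ij} = ρ_{αα} c^{(α)}_{ij}; in particular E^#(ρ) is a density matrix (circulant state) for every density matrix ρ on ℂ^d. -/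
open Matrix Kronecker BigOperators ComplexOrder

/-!
Since `V_{iα} ρ V_{jα}^* = ρ_{αα} e_{i+α, j+α}`, the lifting splits as
`E^#(ρ) = ∑_α ρ_{αα} J_α c^{(α)} J_α^*`, where `J_α` is the isometry `e_i ↦ e_i ⊗ e_{i+α}`.
Each summand is a congruence of a positive matrix, and `Tr (J_α c J_α^*) = Tr c = 1`, so the
trace is `∑_α ρ_{αα} = Tr ρ = 1`.
-/

namespace Matrix

variable {R m n : Type*} [DecidableEq n]

theorem single_mul_mul_conjTranspose_single [DecidableEq m] [Fintype n] [Semiring R]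
    [StarRing R] (i j : m) (k : n) (x : Matrix n n R) :
    single i k (1 : R) * x * (single j k (1 : R))ᴴ = x k k • single i j (1 : R) := by
  rw [conjTranspose_single, star_one, single_mul_mul_single, one_mul, mul_one, smul_single,
    smul_eq_mul, mul_one]

variable [Fintype m]

-- `(1 : Matrix n n R).submatrix id f` is the matrix of `e_i ↦ e_{f i}`.
theorem sum_smul_single_eq_mul_mul_conjTranspose [Semiring R] [StarRing R]
    (f : m → n) (a : Matrix m m R) :
    ∑ i, ∑ j, a i j • single (f i) (f j) (1 : R) =
      (1 : Matrix n n R).submatrix id f * a * ((1 : Matrix n n R).submatrix id f)ᴴ := by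
  ext p q
  simp only [Matrix.sum_apply, mul_apply, Matrix.smul_apply, single_apply, submatrix_apply,
    one_apply, conjTranspose_apply, id]
  rw [Finset.sum_comm]
  refine Finset.sum_congr rfl fun j _ => ?_
  simp only [Finset.sum_mul]
  refine Finset.sum_congr rfl fun i _ => ?_
  split_ifs <;> simp_all [eq_comm]

theorem PosSemidef.sum_smul_single_s19 [Fintype n] [CommRing R] [PartialOrder R] [StarRing R]
    {a : Matrix m m R} (ha : a.PosSemidef) (f : m → n) :
    (∑ i, ∑ j, a i j • single (f i) (f j) (1 : R)).PosSemidef := by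
  rw [sum_smul_single_eq_mul_mul_conjTranspose]
  exact ha.mul_mul_conjTranspose_same _

theorem trace_sum_smul_single_of_injective [Fintype n] [Semiring R] {f : m → n}
    (hf : f.Injective) (a : Matrix m m R) :
    (∑ i, ∑ j, a i j • single (f i) (f j) (1 : R)).trace = a.trace := by
  simp only [trace_sum, smul_single, smul_eq_mul, mul_one]
  refine Finset.sum_congr rfl fun i _ => ?_
  rw [Fintype.sum_eq_single i fun j hj => trace_single_eq_of_ne _ _ _ (hf.ne (Ne.symm hj)),
    trace_single_eq_same]
  rfl

end Matrix

theorem stmt19_general (d : ℕ)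
    (c : Fin d → Matrix (Fin d) (Fin d) ℂ)
    (hc : ∀ α, (c α).PosSemidef) (hc1 : ∀ α, (c α).trace = 1)
    (V : Fin d → Fin d → Matrix (Fin d) (Fin d) ℂ)
    (hV : ∀ i α, V i α = Matrix.single (i + α) α (1 : ℂ))
    (ρ : Matrix (Fin d) (Fin d) ℂ) (hρ : ρ.PosSemidef) (htr : ρ.trace = 1)
    (Elift : Matrix (Fin d × Fin d) (Fin d × Fin d) ℂ)
    (hElift : Elift = ∑ α : Fin d, ∑ i : Fin d, ∑ j : Fin d,
      c α i j • (Matrix.single i j (1 : ℂ) ⊗ₖ (V i α * ρ * (V j α)ᴴ))) :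
    (Elift = ∑ α : Fin d, ∑ i : Fin d, ∑ j : Fin d,
      (ρ α α * c α i j) • (Matrix.single i j (1 : ℂ) ⊗ₖ
        Matrix.single (i + α) (j + α) (1 : ℂ))) ∧
    Elift.PosSemidef ∧ Elift.trace = 1 := by
  have hE : Elift = ∑ α : Fin d, ∑ i : Fin d, ∑ j : Fin d,
      (ρ α α * c α i j) • (single i j (1 : ℂ) ⊗ₖ single (i + α) (j + α) (1 : ℂ)) := by
    simp only [hElift, hV, single_mul_mul_conjTranspose_single, kronecker_smul, smul_smul,
      mul_comm]
  have hblocks : Elift = ∑ α : Fin d, ρ α α •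
      ∑ i : Fin d, ∑ j : Fin d, c α i j • single (i, i + α) (j, j + α) (1 : ℂ) := by
    simp only [hE, single_kronecker_single, mul_one, Finset.smul_sum, smul_smul]
  have hinj (α : Fin d) : Function.Injective fun i : Fin d => (i, i + α) :=
    fun _ _ h => congrArg Prod.fst h
  refine ⟨hE, ?_, ?_⟩
  · rw [hblocks]
    exact posSemidef_sum _ fun α _ => ((hc α).sum_smul_single_s19 _).smul hρ.diag_nonneg
  · simp only [hblocks, trace_sum, trace_smul, trace_sum_smul_single_of_injective (hinj _), hc1,
      smul_eq_mul, mul_one]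
    exact htr

/-- The circulant lifting
`E^#(ρ) = ∑_α ∑_{i,j} c^{(α)}_{ij} e_{ij} ⊗ V_{iα} ρ V_{jα}^*`, with positive
semidefinite unit-trace matrices `c^{(α)}` and `V_{iα} = |e_{i+α}⟩⟨e_α|`,
equals the circulant state
`∑_α ∑_{i,j} a^{(α)}_{ij} e_{ij} ⊗ S^α e_{ij} S^{*α}` with
`a^{(α)}_{ij} = ρ_{αα} c^{(α)}_{ij}`; in particular `E^#(ρ)` is a density
matrix (positive semidefinite of unit trace) for every density matrix `ρ`. -/
theorem stmt19 (d : ℕ) [NeZero d]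
    (c : Fin d → Matrix (Fin d) (Fin d) ℂ)
    (hc : ∀ α, (c α).PosSemidef) (hc1 : ∀ α, (c α).trace = 1)
    (V : Fin d → Fin d → Matrix (Fin d) (Fin d) ℂ)
    (hV : ∀ i α, V i α = Matrix.single (i + α) α (1 : ℂ))
    (ρ : Matrix (Fin d) (Fin d) ℂ) (hρ : ρ.PosSemidef) (htr : ρ.trace = 1)
    (Elift : Matrix (Fin d × Fin d) (Fin d × Fin d) ℂ)
    (hElift : Elift = ∑ α : Fin d, ∑ i : Fin d, ∑ j : Fin d,
      c α i j • (Matrix.single i j (1 : ℂ) ⊗ₖ (V i α * ρ * (V j α)ᴴ))) :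
    (Elift = ∑ α : Fin d, ∑ i : Fin d, ∑ j : Fin d,
      (ρ α α * c α i j) • (Matrix.single i j (1 : ℂ) ⊗ₖ
        Matrix.single (i + α) (j + α) (1 : ℂ))) ∧
    Elift.PosSemidef ∧ Elift.trace = 1 :=
  stmt19_general d c hc hc1 V hV ρ hρ htr Elift hElift
end
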